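/- Let b = (b₁,b₂,b₃,b₄) with each b_l ∈ ℂ∖{0}, let θ = θ(b), let (i,j,k) be a cyclic permutation of (1,2,3), and assume b_i²b₄² ≠ 1. Define x ∈ ℂ³ by x_i = b_ib₄ + (b_ib₄)⁻¹, x_j = G(b_i,b₄;b_j,b_k) and x_k = G(b_i,b₄;b_k,b_j). Then f(x,θ) = 0, y_j(x,θ) = 0 and y_k(x,θ) = 0; in particular x = P(b_i,b₄;b_j,b_k) is a fixed point of the transformation g_j² on the cubic surface S(θ). -/

import Mathlib

/-!
Write `δ_t = t - t⁻¹` and `a_t = t + t⁻¹`. Clearing denominators, `G` simplifies to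
`G(u,v;w,s) = (δ_u a_w + δ_v a_s) / δ_{uv}`. With `x_i = a_{uv}` fixed, `y_j = y_k = 0` is a linear
system in `(x_j, x_k)` of determinant `4 - x_i² = -δ_{uv}²`, and the identities
`a_{uv} δ_v - δ_{uv} a_v = -2 δ_u`, `a_{uv} δ_u - δ_{uv} a_u = -2 δ_v` show that this point solves it
whatever `a_j, a_k` are; `f` vanishes there identically as well. Finally, `y_j = y_k = 0` is exactly
the condition for a fixed point of `g_j²`.
-/

/-- `G(u,v;w,s)` from the fixed-point formulas. -/
noncomputable def Gfun (u v w s : ℂ) : ℂ :=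
  (u + v) * (w + s) * (w * s + 1) / (2 * (u * v + 1) * w * s)
    + (u - v) * (w - s) * (w * s - 1) / (2 * (u * v - 1) * w * s)

/-- The square `g_j²` of the basic transformation attached to a cyclic permutation
`(i,j,k)` of `(1,2,3)`, written in the coordinates `(x_i, x_j, x_k)`. -/
noncomputable def gjsq (θj θk : ℂ) : ℂ × ℂ × ℂ → ℂ × ℂ × ℂ :=
  fun x => (x.1, θj - x.2.1 - x.1 * (θk - x.2.2 - x.1 * x.2.1),
            θk - x.2.2 - x.1 * x.2.1)

theorem Gfun_eq {u v w s : ℂ} (hu : u ≠ 0) (hv : v ≠ 0) (hw : w ≠ 0) (hs : s ≠ 0)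
    (h : u ^ 2 * v ^ 2 ≠ 1) :
    Gfun u v w s = ((u - u⁻¹) * (w + w⁻¹) + (v - v⁻¹) * (s + s⁻¹)) / (u * v - (u * v)⁻¹) := by
  have h' : (u * v + 1) * (u * v - 1) ≠ 0 := fun h0 ↦ h (by linear_combination h0)
  have hp := left_ne_zero_of_mul h'
  have hm := right_ne_zero_of_mul h'
  rw [Gfun]
  field_simp
  ring

theorem cubic_eq_zero_and_y_eq_zero {K : Type*} [Field K] {u v ai aj ak a4 xi xj xk : K}
    (hu : u ≠ 0) (hv : v ≠ 0) (h : u ^ 2 * v ^ 2 ≠ 1)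
    (hai : ai = u + u⁻¹) (ha4 : a4 = v + v⁻¹) (hxi : xi = u * v + (u * v)⁻¹)
    (hxj : xj = ((u - u⁻¹) * aj + (v - v⁻¹) * ak) / (u * v - (u * v)⁻¹))
    (hxk : xk = ((u - u⁻¹) * ak + (v - v⁻¹) * aj) / (u * v - (u * v)⁻¹)) :
    xi * xj * xk + xi ^ 2 + xj ^ 2 + xk ^ 2 - (ai * a4 + aj * ak) * xi - (aj * a4 + ak * ai) * xj
        - (ak * a4 + ai * aj) * xk + (ai * aj * ak * a4 + ai ^ 2 + aj ^ 2 + ak ^ 2 + a4 ^ 2 - 4) = 0 ∧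
      2 * xj + xk * xi - (aj * a4 + ak * ai) = 0 ∧
      2 * xk + xi * xj - (ak * a4 + ai * aj) = 0 := by
  subst hai ha4 hxi hxj hxk
  refine ⟨?_, ?_, ?_⟩ <;> field_simp <;> ring

theorem gjsq_eq_self {θj θk xi xj xk : ℂ} (hj : 2 * xj + xk * xi - θj = 0)
    (hk : 2 * xk + xi * xj - θk = 0) : gjsq θj θk (xi, xj, xk) = (xi, xj, xk) := by
  simp only [gjsq, Prod.mk.injEq, true_and]
  constructor
  · linear_combination -hj + xi * hk
  · linear_combination -hk

/-- With `θ = θ(b)` and `b_i²b₄² ≠ 1`, the point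
`P(b_i,b₄;b_j,b_k) = (F(b_i,b₄), G(b_i,b₄;b_j,b_k), G(b_i,b₄;b_k,b_j))` lies on `S(θ)`,
satisfies `y_j = y_k = 0`, and hence is a fixed point of `g_j²`. -/
theorem P_is_fixed_point
    (bi bj bk b4 : ℂ) (hbi : bi ≠ 0) (hbj : bj ≠ 0) (hbk : bk ≠ 0) (hb4 : b4 ≠ 0)
    (h : bi ^ 2 * b4 ^ 2 ≠ 1) :
    (fun ai aj ak a4 =>
      (fun θi θj θk θ4 =>
        (fun xi xj xk =>
          xi * xj * xk + xi ^ 2 + xj ^ 2 + xk ^ 2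
              - θi * xi - θj * xj - θk * xk + θ4 = 0 ∧
          2 * xj + xk * xi - θj = 0 ∧
          2 * xk + xi * xj - θk = 0 ∧
          gjsq θj θk (xi, xj, xk) = (xi, xj, xk))
        (bi * b4 + (bi * b4)⁻¹) (Gfun bi b4 bj bk) (Gfun bi b4 bk bj))
      (ai * a4 + aj * ak) (aj * a4 + ak * ai) (ak * a4 + ai * aj)
      (ai * aj * ak * a4 + ai ^ 2 + aj ^ 2 + ak ^ 2 + a4 ^ 2 - 4))
    (bi + bi⁻¹) (bj + bj⁻¹) (bk + bk⁻¹) (b4 + b4⁻¹) := by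
  obtain ⟨hf, hyj, hyk⟩ := cubic_eq_zero_and_y_eq_zero (aj := bj + bj⁻¹) (ak := bk + bk⁻¹)
    hbi hb4 h rfl rfl rfl (Gfun_eq hbi hb4 hbj hbk h) (Gfun_eq hbi hb4 hbk hbj h)
  exact ⟨hf, hyj, hyk, gjsq_eq_self hyj hyk⟩
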